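/- Let M be the finite subset of the boundary of the cube [0,1]⁴ (with the ℓ∞ metric) consisting of the centers of all 2-dimensional faces (points with two coordinates equal to 1/2 and the others in {0,1}). For i = 1,…,4 let f_i ∈ TP(M) assign +1/6 to the center of each of the six 2-dimensional faces lying in the facet x_i = 0, and −1/6 to the corresponding points in the facet x_i = 1. Then ||f_i||_TC = 1 for each i, and ||Σ_{i=1}^4 θ_i f_i||_TC = 1 for all signs θ_i ∈ {−1,1}; hence TC(M) contains an isometric copy of ℓ∞⁴. -/
import Mathlib

/-- The transportation cost (Kantorovich–Rubinstein) norm of a finitely supported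
zero-sum function `f` on a metric space: the infimum of costs of transportation
plans solving `f`. -/
noncomputable def tcCost {M : Type*} [MetricSpace M] (f : M →₀ ℝ) : ℝ :=
  sInf {c : ℝ | ∃ (n : ℕ) (a : Fin n → ℝ) (x y : Fin n → M),
    (∀ i, 0 ≤ a i) ∧
    f = ∑ i, a i • (Finsupp.single (x i) 1 - Finsupp.single (y i) 1) ∧
    c = ∑ i, a i * dist (x i) (y i)}


section general
variable {X : Type*} [MetricSpace X]

def tcSet (f : X →₀ ℝ) : Set ℝ :=
  {c : ℝ | ∃ (n : ℕ) (a : Fin n → ℝ) (x y : Fin n → X),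
    (∀ i, 0 ≤ a i) ∧
    f = ∑ i, a i • (Finsupp.single (x i) 1 - Finsupp.single (y i) 1) ∧
    c = ∑ i, a i * dist (x i) (y i)}

lemma tcCost_eq_sInf (f : X →₀ ℝ) : tcCost f = sInf (tcSet f) := rfl

lemma tcSet_bddBelow (f : X →₀ ℝ) : BddBelow (tcSet f) := by
  refine ⟨0, fun c hc => ?_⟩
  obtain ⟨n, a, x, y, ha, -, hc⟩ := hc
  rw [hc]
  exact Finset.sum_nonneg fun i _ => mul_nonneg (ha i) dist_nonneg

lemma plan_mem_tcSet (f : X →₀ ℝ) {ι : Type*} [Fintype ι]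
    (a : ι → ℝ) (x y : ι → X) (ha : ∀ i, 0 ≤ a i)
    (hf : f = ∑ i, a i • (Finsupp.single (x i) 1 - Finsupp.single (y i) 1)) :
    (∑ i, a i * dist (x i) (y i)) ∈ tcSet f := by
  classical
  let e := (Fintype.equivFin ι).symm
  refine ⟨Fintype.card ι, a ∘ e, x ∘ e, y ∘ e, fun i => ha _, ?_, ?_⟩
  · rw [hf]
    exact (Equiv.sum_comp e fun i =>
      a i • ((Finsupp.single (x i) (1:ℝ)) - Finsupp.single (y i) 1)).symm
  · exact (Equiv.sum_comp e fun i => a i * dist (x i) (y i)).symm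

lemma tcCost_le_plan (f : X →₀ ℝ) {ι : Type*} [Fintype ι]
    (a : ι → ℝ) (x y : ι → X) (ha : ∀ i, 0 ≤ a i)
    (hf : f = ∑ i, a i • (Finsupp.single (x i) 1 - Finsupp.single (y i) 1)) :
    tcCost f ≤ ∑ i, a i * dist (x i) (y i) :=
  csInf_le (tcSet_bddBelow f) (plan_mem_tcSet f a x y ha hf)

lemma pair_le_tcCost (f : X →₀ ℝ) (hne : (tcSet f).Nonempty)
    (g : X → ℝ) (hg : ∀ u v : X, g u - g v ≤ dist u v) :
    Finsupp.linearCombination ℝ g f ≤ tcCost f := by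
  refine le_csInf hne fun c hc => ?_
  obtain ⟨n, a, x, y, ha, hf, hc⟩ := hc
  rw [hf, hc, map_sum]
  refine Finset.sum_le_sum fun i _ => ?_
  rw [map_smul, map_sub, Finsupp.linearCombination_single, Finsupp.linearCombination_single,
    one_smul, one_smul, smul_eq_mul]
  exact mul_le_mul_of_nonneg_left (hg _ _) (ha i)

end general



/-- The center of the 2-dimensional face `{x_i = a, x_j = b}` of the cube `[0,1]⁴`
(for `i ≠ j`, `a, b ∈ {0,1}`): coordinates `i` and `j` equal `a` and `b`, the other two
equal `1/2`. -/
noncomputable def fctr (i j : Fin 4) (a b : ℝ) : Fin 4 → ℝ :=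
  fun k => if k = i then a else if k = j then b else 1/2

/-- The finite subset of the boundary of `[0,1]⁴` consisting of the centers of all
2-dimensional faces: the points with two coordinates equal to `1/2` and the other two in
`{0,1}`. It carries the `ℓ∞` metric inherited from `Fin 4 → ℝ`. -/
def M4 : Set (Fin 4 → ℝ) :=
  {x | ∃ i j : Fin 4, ∃ a b : ℝ,
    i ≠ j ∧ (a = 0 ∨ a = 1) ∧ (b = 0 ∨ b = 1) ∧ x = fctr i j a b}

lemma mem01 {b : ℝ} (hb : b ∈ ({0, 1} : Finset ℝ)) : b = 0 ∨ b = 1 := by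
  rcases Finset.mem_insert.mp hb with h | h
  · exact Or.inl h
  · exact Or.inr (Finset.mem_singleton.mp h)

lemma fctr_mem (i j : Fin 4) (hij : i ≠ j) (a b : ℝ)
    (ha : a = 0 ∨ a = 1) (hb : b = 0 ∨ b = 1) : fctr i j a b ∈ M4 :=
  ⟨i, j, a, b, hij, ha, hb, rfl⟩

lemma fctr_swap {i j : Fin 4} (hij : i ≠ j) (a b : ℝ) :
    fctr i j a b = fctr j i b a := by
  funext k
  simp only [fctr]
  by_cases hki : k = i <;> by_cases hkj : k = j <;>
    simp [hki, hkj, hij] <;> simp_all <;> exact absurd rfl hij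

/-- distance between face centers of "disjoint" faces is 1/2 -/
lemma dist_fctr_half {i j k l : Fin 4} {a b c d : ℝ}
    (hik : i ≠ k) (hil : i ≠ l) (hjk : j ≠ k) (hjl : j ≠ l)
    (ha : a = 0 ∨ a = 1) (hb : b = 0 ∨ b = 1) (hc : c = 0 ∨ c = 1) (hd : d = 0 ∨ d = 1) :
    dist (fctr i j a b) (fctr k l c d) = 1/2 := by
  have habs : ∀ u : ℝ, (u = 0 ∨ u = 1) → |u - 1/2| = 1/2 := by
    rintro u (rfl | rfl) <;> norm_num [abs_of_nonpos, abs_of_nonneg]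
  refine le_antisymm ?_ ?_
  · rw [dist_pi_le_iff (by norm_num)]
    intro m
    rw [Real.dist_eq]
    simp only [fctr]
    by_cases hmi : m = i
    · subst hmi
      rw [if_pos rfl, if_neg hik, if_neg hil]
      exact le_of_eq (habs a ha)
    by_cases hmj : m = j
    · subst hmj
      rw [if_neg hmi, if_pos rfl, if_neg hjk, if_neg hjl]
      exact le_of_eq (habs b hb)
    by_cases hmk : m = k
    · subst hmk
      rw [if_neg hmi, if_neg hmj, if_pos rfl]
      rw [abs_sub_comm]
      exact le_of_eq (habs c hc)
    by_cases hml : m = l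
    · subst hml
      rw [if_neg hmi, if_neg hmj, if_neg hmk, if_pos rfl]
      rw [abs_sub_comm]
      exact le_of_eq (habs d hd)
    · rw [if_neg hmi, if_neg hmj, if_neg hmk, if_neg hml]
      norm_num
  · have h := dist_le_pi_dist (fctr i j a b) (fctr k l c d) i
    rw [Real.dist_eq] at h
    simp only [fctr, if_pos rfl, if_neg hik, if_neg hil] at h
    rw [← habs a ha]
    exact h

noncomputable def pt (i j : Fin 4) (a b : ℝ) : M4 :=
  if h : i ≠ j ∧ (a = 0 ∨ a = 1) ∧ (b = 0 ∨ b = 1) then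
    ⟨fctr i j a b, fctr_mem i j h.1 a b h.2.1 h.2.2⟩
  else ⟨fctr 0 1 0 0, fctr_mem 0 1 (by decide) 0 0 (Or.inl rfl) (Or.inl rfl)⟩

lemma pt_coe {i j : Fin 4} {a b : ℝ} (hij : i ≠ j) (ha : a = 0 ∨ a = 1)
    (hb : b = 0 ∨ b = 1) : (pt i j a b : Fin 4 → ℝ) = fctr i j a b := by
  rw [pt, dif_pos ⟨hij, ha, hb⟩]

lemma pt_swap {i j : Fin 4} {a b : ℝ} (hij : i ≠ j) (ha : a = 0 ∨ a = 1)
    (hb : b = 0 ∨ b = 1) : pt i j a b = pt j i b a := by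
  apply Subtype.ext
  rw [pt_coe hij ha hb, pt_coe (Ne.symm hij) hb ha]
  exact fctr_swap hij a b

lemma dist_pt_half {i j k l : Fin 4} {a b c d : ℝ} (hij : i ≠ j) (hkl : k ≠ l)
    (hik : i ≠ k) (hil : i ≠ l) (hjk : j ≠ k) (hjl : j ≠ l)
    (ha : a = 0 ∨ a = 1) (hb : b = 0 ∨ b = 1) (hc : c = 0 ∨ c = 1) (hd : d = 0 ∨ d = 1) :
    dist (pt i j a b) (pt k l c d) = 1/2 := by
  rw [Subtype.dist_eq, pt_coe hij ha hb, pt_coe hkl hc hd]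
  exact dist_fctr_half hik hil hjk hjl ha hb hc hd


/-- The transportation problem `f4 i` on `M4`: `+1/6` at the center of each of the six
2-dimensional faces contained in the facet `x_i = 0`, and `−1/6` at the corresponding
points of the facet `x_i = 1`. -/
noncomputable def f4 (i : Fin 4) : (M4 : Set (Fin 4 → ℝ)) →₀ ℝ :=
  (1/6 : ℝ) • ∑ j ∈ (Finset.univ.erase i).attach, ∑ b ∈ ({0, 1} : Finset ℝ).attach,
      (Finsupp.single
          (⟨fctr i j.1 0 b.1,
            fctr_mem i j.1 (Finset.mem_erase.mp j.2).1.symm 0 b.1 (Or.inl rfl)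
              (mem01 b.2)⟩ : M4) 1
        - Finsupp.single
          (⟨fctr i j.1 1 b.1,
            fctr_mem i j.1 (Finset.mem_erase.mp j.2).1.symm 1 b.1 (Or.inr rfl)
              (mem01 b.2)⟩ : M4) 1)

lemma mk_eq_pt {i j : Fin 4} {a b : ℝ} (hij : i ≠ j) (ha : a = 0 ∨ a = 1)
    (hb : b = 0 ∨ b = 1) (h : fctr i j a b ∈ M4) :
    (⟨fctr i j a b, h⟩ : M4) = pt i j a b := Subtype.ext (pt_coe hij ha hb).symm

lemma f4_eq (i : Fin 4) : f4 i = ∑ j ∈ Finset.univ.erase i, ∑ b ∈ ({0, 1} : Finset ℝ),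
    (1/6 : ℝ) • (Finsupp.single (pt i j 0 b) 1 - Finsupp.single (pt i j 1 b) 1) := by
  rw [f4, Finset.smul_sum]
  rw [← Finset.sum_attach (Finset.univ.erase i) (fun j => ∑ b ∈ ({0, 1} : Finset ℝ),
    (1/6 : ℝ) • (Finsupp.single (pt i j 0 b) 1 - Finsupp.single (pt i j 1 b) 1))]
  refine Finset.sum_congr rfl fun j _ => ?_
  rw [Finset.smul_sum]
  rw [← Finset.sum_attach (({0, 1} : Finset ℝ)) (fun b =>
    (1/6 : ℝ) • (Finsupp.single (pt i j.1 0 b) 1 - Finsupp.single (pt i j.1 1 b) 1))]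
  refine Finset.sum_congr rfl fun b _ => ?_
  have hij : i ≠ j.1 := (Finset.mem_erase.mp j.2).1.symm
  rw [mk_eq_pt hij (Or.inl rfl) (mem01 b.2), mk_eq_pt hij (Or.inr rfl) (mem01 b.2)]

lemma pair_f4 (g : M4 → ℝ) (j : Fin 4) :
    Finsupp.linearCombination ℝ g (f4 j)
      = ∑ k ∈ Finset.univ.erase j, ∑ b ∈ ({0, 1} : Finset ℝ),
          (1/6 : ℝ) * (g (pt j k 0 b) - g (pt j k 1 b)) := by
  rw [f4_eq, map_sum]
  refine Finset.sum_congr rfl fun k _ => ?_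
  rw [map_sum]
  refine Finset.sum_congr rfl fun b _ => ?_
  rw [map_smul, map_sub, Finsupp.linearCombination_single, Finsupp.linearCombination_single,
    one_smul, one_smul, smul_eq_mul]

lemma pair_f4_coord (i j : Fin 4) :
    Finsupp.linearCombination ℝ (fun p : M4 => -(p.1 i)) (f4 j) = if i = j then 1 else 0 := by
  rw [pair_f4]
  have hcard : (Finset.univ.erase j).card = 3 := by
    rw [Finset.card_erase_of_mem (Finset.mem_univ j)]
    simp
  have hterm : ∀ k ∈ Finset.univ.erase j,
      (∑ b ∈ ({0, 1} : Finset ℝ), (1/6 : ℝ) *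
        ((fun p : M4 => -(p.1 i)) (pt j k 0 b) - (fun p : M4 => -(p.1 i)) (pt j k 1 b)))
      = 2 * ((1/6) * (if i = j then 1 else 0)) := by
    intro k hk
    have hjk : j ≠ k := (Finset.mem_erase.mp hk).1.symm
    have hb : ∀ b ∈ ({0, 1} : Finset ℝ),
        (1/6 : ℝ) * ((fun p : M4 => -(p.1 i)) (pt j k 0 b) - (fun p : M4 => -(p.1 i)) (pt j k 1 b))
        = (1/6) * (if i = j then 1 else 0) := by
      intro b hb
      simp only []
      rw [pt_coe hjk (Or.inl rfl) (mem01 hb), pt_coe hjk (Or.inr rfl) (mem01 hb)]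
      simp only [fctr]
      by_cases hij : i = j
      · rw [if_pos hij, if_pos hij, if_pos hij]
        norm_num
      · rw [if_neg hij, if_neg hij]
        simp [hij]
    rw [Finset.sum_congr rfl hb, Finset.sum_const]
    have : ({0, 1} : Finset ℝ).card = 2 := by
      rw [Finset.card_insert_of_notMem (by norm_num), Finset.card_singleton]
    rw [this]
    push_cast
    ring
  rw [Finset.sum_congr rfl hterm, Finset.sum_const, hcard]
  push_cast
  split <;> ring

lemma theta_f4 (i : Fin 4) {t v : ℝ} (h : (t = 1 ∧ v = 0) ∨ (t = -1 ∧ v = 1)) :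
    t • f4 i = ∑ j ∈ Finset.univ.erase i, ∑ b ∈ ({0, 1} : Finset ℝ),
      (1/6 : ℝ) • (Finsupp.single (pt i j v b) 1 - Finsupp.single (pt i j (1 - v) b) 1) := by
  rcases h with ⟨rfl, rfl⟩ | ⟨rfl, rfl⟩
  · rw [one_smul, f4_eq]
    norm_num
  · rw [f4_eq, Finset.smul_sum]
    refine Finset.sum_congr rfl fun j _ => ?_
    rw [Finset.smul_sum]
    refine Finset.sum_congr rfl fun b _ => ?_
    rw [smul_smul]
    norm_num [neg_smul, ← smul_neg, neg_sub]

def P4 : Finset (Fin 4 × Fin 4) := Finset.univ.filter (fun p => p.1 ≠ p.2)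

def mm : Fin 4 → Fin 4 → Fin 4 := ![![0, 2, 1, 1], ![3, 0, 0, 0], ![3, 3, 0, 0], ![2, 2, 1, 0]]

lemma mm_facts : ∀ i j : Fin 4, i ≠ j →
    (mm i j ≠ i ∧ mm i j ≠ j ∧ mm j i ≠ i ∧ mm j i ≠ j ∧ mm i j ≠ mm j i ∧
     mm (mm i j) (mm j i) = i ∧ mm (mm j i) (mm i j) = j) := by decide

lemma card_P4 : P4.card = 12 := by decide

lemma sum_P4 {β : Type*} [AddCommMonoid β] (F : Fin 4 → Fin 4 → β) :
    ∑ p ∈ P4, F p.1 p.2 = ∑ i, ∑ j ∈ Finset.univ.erase i, F i j := by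
  rw [P4, Finset.sum_filter, ← Finset.univ_product_univ, Finset.sum_product]
  refine Finset.sum_congr rfl fun i _ => ?_
  rw [← Finset.sum_filter (fun j => i ≠ j) (fun j => F i j), Finset.filter_ne]

lemma sum_b_split {i j : Fin 4} (hij : i ≠ j) {w u : ℝ} (hw : w = 0 ∨ w = 1)
    (hu : u = 0 ∨ u = 1) :
    ∑ b ∈ ({0, 1} : Finset ℝ), Finsupp.single (pt i j w b) (1 : ℝ)
      = Finsupp.single (pt i j w u) 1 + Finsupp.single (pt i j w (1 - u)) 1 := by
  rw [Finset.sum_pair (by norm_num : (0 : ℝ) ≠ 1)]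
  rcases hu with rfl | rfl
  · norm_num
  · norm_num [add_comm]

lemma sum_theta_f4 (θ : Fin 4 → ℝ) (v : Fin 4 → ℝ)
    (hv : ∀ i, (θ i = 1 ∧ v i = 0) ∨ (θ i = -1 ∧ v i = 1)) :
    ∑ i, θ i • f4 i = ∑ p ∈ P4, (1/6 : ℝ) •
      (Finsupp.single (pt p.1 p.2 (v p.1) (v p.2)) 1
       - Finsupp.single (pt (mm p.1 p.2) (mm p.2 p.1)
           (1 - v (mm p.1 p.2)) (1 - v (mm p.2 p.1))) 1) := by
  classical
  have hv01 : ∀ i, v i = 0 ∨ v i = 1 := fun i => by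
    rcases hv i with ⟨-, h⟩ | ⟨-, h⟩
    exacts [Or.inl h, Or.inr h]
  have hv01' : ∀ i, 1 - v i = 0 ∨ 1 - v i = 1 := fun i => by
    rcases hv01 i with h | h <;> rw [h] <;> norm_num
  -- Step 1: LHS as a sum over P4 of four-term packets
  have step1 : ∑ i, θ i • f4 i = ∑ p ∈ P4, (1/6 : ℝ) •
      ((Finsupp.single (pt p.1 p.2 (v p.1) (v p.2)) 1
        + Finsupp.single (pt p.1 p.2 (v p.1) (1 - v p.2)) 1)
       - (Finsupp.single (pt p.1 p.2 (1 - v p.1) (v p.2)) 1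
          + Finsupp.single (pt p.1 p.2 (1 - v p.1) (1 - v p.2)) 1)) := by
    rw [sum_P4 (fun i j => (1/6 : ℝ) •
      ((Finsupp.single (pt i j (v i) (v j)) 1 + Finsupp.single (pt i j (v i) (1 - v j)) 1)
       - (Finsupp.single (pt i j (1 - v i) (v j)) 1
          + Finsupp.single (pt i j (1 - v i) (1 - v j)) 1)))]
    refine Finset.sum_congr rfl fun i _ => ?_
    rw [theta_f4 i (hv i)]
    refine Finset.sum_congr rfl fun j hj => ?_
    have hij : i ≠ j := (Finset.mem_erase.mp hj).1.symm
    have e1 : ∑ b ∈ ({0, 1} : Finset ℝ),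
        ((1/6 : ℝ) • (Finsupp.single (pt i j (v i) b) 1
          - Finsupp.single (pt i j (1 - v i) b) 1))
        = (1/6 : ℝ) • (∑ b ∈ ({0, 1} : Finset ℝ), Finsupp.single (pt i j (v i) b) (1:ℝ)
            - ∑ b ∈ ({0, 1} : Finset ℝ), Finsupp.single (pt i j (1 - v i) b) (1:ℝ)) := by
      rw [← Finset.sum_sub_distrib, Finset.smul_sum]
    rw [e1, sum_b_split hij (hv01 i) (hv01 j), sum_b_split hij (hv01' i) (hv01 j)]
  rw [step1]
  -- both sides: pull out sums
  have expand : ∀ (A B C D : Fin 4 × Fin 4 → M4 →₀ ℝ),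
      ∑ p ∈ P4, (1/6 : ℝ) • ((A p + B p) - (C p + D p))
        = (1/6 : ℝ) • (∑ p ∈ P4, A p + ∑ p ∈ P4, B p - (∑ p ∈ P4, C p + ∑ p ∈ P4, D p)) := by
    intro A B C D
    rw [← Finset.smul_sum, Finset.sum_sub_distrib, Finset.sum_add_distrib,
      Finset.sum_add_distrib]
  have expand2 : ∀ (A D : Fin 4 × Fin 4 → M4 →₀ ℝ),
      ∑ p ∈ P4, (1/6 : ℝ) • (A p - D p)
        = (1/6 : ℝ) • (∑ p ∈ P4, A p - ∑ p ∈ P4, D p) := by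
    intro A D
    rw [← Finset.smul_sum, Finset.sum_sub_distrib]
  rw [expand, expand2]
  have memP4 : ∀ p : Fin 4 × Fin 4, p ∈ P4 ↔ p.1 ≠ p.2 := by
    intro p
    simp [P4]
  -- cross terms cancel under the swap
  have hswap : ∑ p ∈ P4, Finsupp.single (pt p.1 p.2 (v p.1) (1 - v p.2)) (1:ℝ)
      = ∑ p ∈ P4, Finsupp.single (pt p.1 p.2 (1 - v p.1) (v p.2)) (1:ℝ) := by
    refine Finset.sum_nbij' (fun p => (p.2, p.1)) (fun p => (p.2, p.1)) ?_ ?_ ?_ ?_ ?_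
    · intro p hp; rw [memP4] at *; exact Ne.symm hp
    · intro p hp; rw [memP4] at *; exact Ne.symm hp
    · intro p _; rfl
    · intro p _; rfl
    · intro p hp
      rw [memP4] at hp
      simp only []
      rw [pt_swap hp (hv01 p.1) (hv01' p.2)]
  -- the sink terms reindexed by the complement involution
  have hcpl : ∑ p ∈ P4, Finsupp.single (pt (mm p.1 p.2) (mm p.2 p.1)
        (1 - v (mm p.1 p.2)) (1 - v (mm p.2 p.1))) (1:ℝ)
      = ∑ p ∈ P4, Finsupp.single (pt p.1 p.2 (1 - v p.1) (1 - v p.2)) (1:ℝ) := by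
    refine Finset.sum_nbij' (fun p => (mm p.1 p.2, mm p.2 p.1))
      (fun p => (mm p.1 p.2, mm p.2 p.1)) ?_ ?_ ?_ ?_ ?_
    · intro p hp; rw [memP4] at *
      exact (mm_facts p.1 p.2 hp).2.2.2.2.1
    · intro p hp; rw [memP4] at *
      exact (mm_facts p.1 p.2 hp).2.2.2.2.1
    · intro p hp; rw [memP4] at hp
      obtain ⟨-, -, -, -, -, h6, h7⟩ := mm_facts p.1 p.2 hp
      exact Prod.ext h6 h7
    · intro p hp; rw [memP4] at hp
      obtain ⟨-, -, -, -, -, h6, h7⟩ := mm_facts p.1 p.2 hp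
      exact Prod.ext h6 h7
    · intro p _; rfl
  rw [hswap, hcpl]
  abel_nf

noncomputable def wS (b : Fin 4 → ℝ) (S : Finset (Fin 4)) : ℝ :=
  (∏ i ∈ S, (1 + b i)/2) * ∏ i ∈ Finset.univ \ S, (1 - b i)/2

lemma sum_wS (b : Fin 4 → ℝ) : ∑ S ∈ Finset.univ.powerset, wS b S = 1 := by
  unfold wS
  rw [← Finset.prod_add (fun i => (1 + b i)/2) (fun i => (1 - b i)/2) Finset.univ]
  exact Finset.prod_eq_one fun i _ => by ring

lemma wS_nonneg {b : Fin 4 → ℝ} (hb : ∀ i, |b i| ≤ 1) (S : Finset (Fin 4)) : 0 ≤ wS b S := by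
  have h1 : ∀ i, 0 ≤ (1 + b i)/2 := fun i => by
    have := (abs_le.mp (hb i)).1; linarith
  have h2 : ∀ i, 0 ≤ (1 - b i)/2 := fun i => by
    have := (abs_le.mp (hb i)).2; linarith
  exact mul_nonneg (Finset.prod_nonneg fun i _ => h1 i) (Finset.prod_nonneg fun i _ => h2 i)

lemma marg_wS (b : Fin 4 → ℝ) (j : Fin 4) :
    ∑ S ∈ Finset.univ.powerset, wS b S * (if j ∈ S then 1 else -1) = b j := by
  classical
  set q' : Fin 4 → ℝ := fun i => if i = j then -((1 - b i)/2) else (1 - b i)/2 with hq'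
  have key : ∀ S ∈ Finset.univ.powerset,
      wS b S * (if j ∈ S then 1 else -1)
        = (∏ i ∈ S, (1 + b i)/2) * ∏ i ∈ Finset.univ \ S, q' i := by
    intro S _
    by_cases hj : j ∈ S
    · have hj' : j ∉ Finset.univ \ S := by simp [hj]
      rw [if_pos hj, mul_one, wS]
      congr 1
      refine Finset.prod_congr rfl fun i hi => ?_
      rw [hq']
      simp only []
      rw [if_neg]
      rintro rfl
      exact hj' hi
    · have hj' : j ∈ Finset.univ \ S := by simp [hj]
      rw [if_neg hj, wS]
      rw [← Finset.mul_prod_erase _ q' hj',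
        ← Finset.mul_prod_erase _ (fun i => (1 - b i)/2) hj']
      have : ∏ i ∈ (Finset.univ \ S).erase j, q' i
          = ∏ i ∈ (Finset.univ \ S).erase j, (1 - b i)/2 := by
        refine Finset.prod_congr rfl fun i hi => ?_
        rw [hq']
        simp only []
        rw [if_neg (Finset.mem_erase.mp hi).1]
      rw [this, hq']
      simp only [if_pos rfl]
      norm_num
  rw [Finset.sum_congr rfl key, ← Finset.prod_add (fun i => (1 + b i)/2) q' Finset.univ]
  rw [Finset.prod_eq_single j
    (fun i _ hij => by rw [hq']; simp only []; rw [if_neg hij]; ring)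
    (by simp)]
  rw [hq']
  simp only []
  norm_num
  ring

lemma pair_f4_coord' (i j : Fin 4) :
    Finsupp.linearCombination ℝ (fun p : M4 => (p.1 i)) (f4 j) = if i = j then -1 else 0 := by
  rw [pair_f4]
  have hcard : (Finset.univ.erase j).card = 3 := by
    rw [Finset.card_erase_of_mem (Finset.mem_univ j)]
    simp
  have hterm : ∀ k ∈ Finset.univ.erase j,
      (∑ b ∈ ({0, 1} : Finset ℝ), (1/6 : ℝ) *
        ((fun p : M4 => (p.1 i)) (pt j k 0 b) - (fun p : M4 => (p.1 i)) (pt j k 1 b)))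
      = 2 * ((1/6) * (if i = j then -1 else 0)) := by
    intro k hk
    have hjk : j ≠ k := (Finset.mem_erase.mp hk).1.symm
    have hb : ∀ b ∈ ({0, 1} : Finset ℝ),
        (1/6 : ℝ) * ((fun p : M4 => (p.1 i)) (pt j k 0 b) - (fun p : M4 => (p.1 i)) (pt j k 1 b))
        = (1/6) * (if i = j then -1 else 0) := by
      intro b hb
      simp only []
      rw [pt_coe hjk (Or.inl rfl) (mem01 hb), pt_coe hjk (Or.inr rfl) (mem01 hb)]
      simp only [fctr]
      by_cases hij : i = j
      · rw [if_pos hij, if_pos hij, if_pos hij]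
        norm_num
      · rw [if_neg hij, if_neg hij]
        simp [hij]
    rw [Finset.sum_congr rfl hb, Finset.sum_const]
    have : ({0, 1} : Finset ℝ).card = 2 := by
      rw [Finset.card_insert_of_notMem (by norm_num), Finset.card_singleton]
    rw [this]
    push_cast
    ring
  rw [Finset.sum_congr rfl hterm, Finset.sum_const, hcard]
  push_cast
  split <;> ring

lemma coord_lip (i : Fin 4) (u v : M4) : u.1 i - v.1 i ≤ dist u v := by
  have h := dist_le_pi_dist u.1 v.1 i
  rw [Real.dist_eq] at h
  rw [Subtype.dist_eq]
  exact le_trans (le_abs_self _) h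

lemma part3 (a : Fin 4 → ℝ) : tcCost (∑ i, a i • f4 i) = ⨆ i, |a i| := by
  classical
  set f := ∑ i, a i • f4 i with hf
  have hbdd : BddAbove (Set.range fun i => |a i|) := Finite.bddAbove_range _
  set m := ⨆ i, |a i| with hm
  have hle : ∀ i, |a i| ≤ m := fun i => le_ciSup hbdd i
  have hm0 : 0 ≤ m := le_trans (abs_nonneg _) (hle 0)
  set b : Fin 4 → ℝ := fun i => if m = 0 then 0 else a i / m with hb
  have hmb : ∀ i, m * b i = a i := by
    intro i
    by_cases h : m = 0
    · have ha0 : a i = 0 := abs_eq_zero.mp (le_antisymm (h ▸ hle i) (abs_nonneg _))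
      simp [hb, h, ha0]
    · rw [hb]
      simp only [if_neg h]
      field_simp
  have hb1 : ∀ i, |b i| ≤ 1 := by
    intro i
    by_cases h : m = 0
    · simp [hb, h]
    · rw [hb]
      simp only [if_neg h]
      rw [abs_div, abs_of_nonneg hm0]
      rw [div_le_one (lt_of_le_of_ne hm0 (Ne.symm h))]
      exact hle i
  set ν : Finset (Fin 4) → Fin 4 → ℝ := fun S i => if i ∈ S then 0 else 1 with hν
  set θ : Finset (Fin 4) → Fin 4 → ℝ := fun S i => if i ∈ S then 1 else -1 with hθ
  have hθν : ∀ S i, (θ S i = 1 ∧ ν S i = 0) ∨ (θ S i = -1 ∧ ν S i = 1) := by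
    intro S i
    by_cases h : i ∈ S <;> simp [hθ, hν, h]
  have step1 : f = ∑ S ∈ Finset.univ.powerset, (m * wS b S) • (∑ i, θ S i • f4 i) := by
    have e : ∀ S ∈ Finset.univ.powerset, (m * wS b S) • (∑ i, θ S i • f4 i)
        = ∑ i, (m * (wS b S * θ S i)) • f4 i := by
      intro S _
      rw [Finset.smul_sum]
      exact Finset.sum_congr rfl fun i _ => by rw [smul_smul, mul_assoc]
    rw [Finset.sum_congr rfl e, Finset.sum_comm, hf]
    refine Finset.sum_congr rfl fun i _ => ?_
    rw [← Finset.sum_smul]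
    congr 1
    rw [← Finset.mul_sum]
    have : ∑ S ∈ Finset.univ.powerset, wS b S * θ S i = b i := by
      rw [← marg_wS b i]
    rw [this, hmb i]
  -- the transportation plan
  set T : Finset (Finset (Fin 4) × (Fin 4 × Fin 4)) := Finset.univ.powerset ×ˢ P4 with hT
  set coeff : Finset (Fin 4) × (Fin 4 × Fin 4) → ℝ := fun q => m * wS b q.1 / 6 with hcoeff
  set src : Finset (Fin 4) × (Fin 4 × Fin 4) → M4 :=
    fun q => pt q.2.1 q.2.2 (ν q.1 q.2.1) (ν q.1 q.2.2) with hsrc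
  set snk : Finset (Fin 4) × (Fin 4 × Fin 4) → M4 :=
    fun q => pt (mm q.2.1 q.2.2) (mm q.2.2 q.2.1)
      (1 - ν q.1 (mm q.2.1 q.2.2)) (1 - ν q.1 (mm q.2.2 q.2.1)) with hsnk
  have plan : f = ∑ q ∈ T,
      coeff q • (Finsupp.single (src q) 1 - Finsupp.single (snk q) 1) := by
    rw [step1, hT, Finset.sum_product]
    refine Finset.sum_congr rfl fun S _ => ?_
    rw [sum_theta_f4 (θ S) (ν S) (hθν S), Finset.smul_sum]
    refine Finset.sum_congr rfl fun p _ => ?_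
    rw [smul_smul]
    congr 1
    rw [hcoeff]
    ring
  have plan' : f = ∑ q : {x // x ∈ T},
      coeff q.1 • (Finsupp.single (src q.1) 1 - Finsupp.single (snk q.1) 1) :=
    plan.trans (Finset.sum_coe_sort T
      (fun q => coeff q • (Finsupp.single (src q) 1 - Finsupp.single (snk q) 1))).symm
  have hnonneg : ∀ q : {x // x ∈ T}, 0 ≤ coeff q.1 := fun q => by
    rw [hcoeff]
    exact div_nonneg (mul_nonneg hm0 (wS_nonneg hb1 _)) (by norm_num)
  have hν01 : ∀ S i, ν S i = 0 ∨ ν S i = 1 := fun S i => by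
    by_cases h : i ∈ S <;> simp [hν, h]
  have hν01' : ∀ S i, 1 - ν S i = 0 ∨ 1 - ν S i = 1 := fun S i => by
    rcases hν01 S i with h | h <;> rw [h] <;> norm_num
  have hdist : ∀ q : {x // x ∈ T}, dist (src q.1) (snk q.1) = 1/2 := by
    rintro ⟨⟨S, p⟩, hq⟩
    have hp : p ∈ P4 := (Finset.mem_product.mp hq).2
    have hpp : p.1 ≠ p.2 := by simpa [P4] using hp
    obtain ⟨h1, h2, h3, h4, h5, -, -⟩ := mm_facts p.1 p.2 hpp
    exact dist_pt_half hpp h5 (Ne.symm h1) (Ne.symm h3) (Ne.symm h2) (Ne.symm h4)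
      (hν01 S p.1) (hν01 S p.2) (hν01' S (mm p.1 p.2)) (hν01' S (mm p.2 p.1))
  have hcost : ∑ q : {x // x ∈ T}, coeff q.1 * dist (src q.1) (snk q.1) = m := by
    have e1 : ∑ q : {x // x ∈ T}, coeff q.1 * dist (src q.1) (snk q.1)
        = ∑ q : {x // x ∈ T}, coeff q.1 * (1/2) :=
      Finset.sum_congr rfl fun q _ => by rw [hdist q]
    rw [e1, Finset.sum_coe_sort T (fun q => coeff q * (1/2)), hT, Finset.sum_product]
    have e2 : ∀ S ∈ Finset.univ.powerset,
        (∑ p ∈ P4, coeff (S, p) * (1/2)) = m * wS b S := by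
      intro S _
      have hc : ∀ p ∈ P4, coeff (S, p) * (1/2) = m * wS b S / 12 := fun p _ => by
        simp only [hcoeff]
        ring
      rw [Finset.sum_congr rfl hc, Finset.sum_const, card_P4]
      push_cast
      ring
    rw [Finset.sum_congr rfl e2, ← Finset.mul_sum, sum_wS]
    ring
  have upper : tcCost f ≤ m := by
    have h := tcCost_le_plan f (fun q : {x // x ∈ T} => coeff q.1)
      (fun q => src q.1) (fun q => snk q.1) hnonneg plan'
    rwa [hcost] at h
  have hne : (tcSet f).Nonempty :=
    ⟨_, plan_mem_tcSet f (fun q : {x // x ∈ T} => coeff q.1)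
      (fun q => src q.1) (fun q => snk q.1) hnonneg plan'⟩
  have lower : ∀ i, |a i| ≤ tcCost f := by
    intro i
    have hpos : Finsupp.linearCombination ℝ (fun p : M4 => -(p.1 i)) f = a i := by
      rw [hf, map_sum]
      have e : ∀ j ∈ Finset.univ,
          Finsupp.linearCombination ℝ (fun p : M4 => -(p.1 i)) (a j • f4 j)
            = if i = j then a j else 0 := fun j _ => by
        rw [map_smul, pair_f4_coord i j, smul_eq_mul]
        split <;> ring
      rw [Finset.sum_congr rfl e, Finset.sum_ite_eq]
      simp
    have hneg : Finsupp.linearCombination ℝ (fun p : M4 => (p.1 i)) f = -(a i) := by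
      rw [hf, map_sum]
      have e : ∀ j ∈ Finset.univ,
          Finsupp.linearCombination ℝ (fun p : M4 => (p.1 i)) (a j • f4 j)
            = if i = j then -(a j) else 0 := fun j _ => by
        rw [map_smul, pair_f4_coord' i j, smul_eq_mul]
        split <;> ring
      rw [Finset.sum_congr rfl e, Finset.sum_ite_eq]
      simp
    refine abs_le'.mpr ⟨?_, ?_⟩
    · rw [← hpos]
      refine pair_le_tcCost f hne _ fun u v => ?_
      have := coord_lip i v u
      rw [dist_comm] at this
      linarith
    · rw [← hneg]
      exact pair_le_tcCost f hne _ fun u v => coord_lip i u v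
  exact le_antisymm upper (ciSup_le lower)

/-- `TC(M4)` contains an isometric copy of `ℓ∞⁴`: each `f4 i` has transportation cost `1`,
every signed sum `Σ θᵢ f4 i` (with `θᵢ = ±1`) has transportation cost `1`, and hence
`‖Σ aᵢ f4 i‖_TC = maxᵢ |aᵢ|` for all reals `aᵢ`. -/
theorem ell_infty_4_in_TC_M4 :
    (∀ i, tcCost (f4 i) = 1) ∧
    (∀ θ : Fin 4 → ℝ, (∀ i, θ i = 1 ∨ θ i = -1) → tcCost (∑ i, θ i • f4 i) = 1) ∧
    (∀ a : Fin 4 → ℝ, tcCost (∑ i, a i • f4 i) = ⨆ i, |a i|) := by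
  have hsup : ∀ (c : Fin 4 → ℝ), (∀ i, |c i| ≤ 1) → (∃ i, |c i| = 1) →
      (⨆ i, |c i|) = 1 := by
    rintro c h1 ⟨i, hi⟩
    refine le_antisymm (ciSup_le h1) ?_
    have h2 := le_ciSup (Finite.bddAbove_range fun j => |c j|) i
    rw [hi] at h2
    exact h2
  refine ⟨?_, ?_, part3⟩
  · intro i
    have h := part3 (fun j => if j = i then (1 : ℝ) else 0)
    have e : ∑ j, (if j = i then (1 : ℝ) else 0) • f4 j = f4 i := by
      simp [ite_smul]
    rw [e] at h
    rw [h]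
    refine hsup _ (fun j => ?_) ⟨i, by simp⟩
    by_cases hj : j = i <;> simp [hj]
  · intro θ hθ
    have h := part3 θ
    rw [h]
    refine hsup _ (fun j => ?_) ⟨0, ?_⟩
    · rcases hθ j with h' | h' <;> rw [h'] <;> norm_num
    · rcases hθ 0 with h' | h' <;> rw [h'] <;> norm_num
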